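/- arXiv:2405.20020 — 2 statements merged into one kernel-verified Lean document; each statement's English description precedes it below -/
import Mathlib

section
/- Let r ≥ 1, 1 ≤ s < ∞, μ > 2r − 1/s + 1. There exists c > 0 such that for every f ∈ W_s^μ and every N ≥ r, the uniform norm of the difference between f^{(r)} and the r-th derivative of the N-th partial Chebyshev–Fourier sum of f satisfies ‖f^{(r)} − Σ_{k=r}^N ⟨f,T_k⟩ T_k^{(r)}‖_C ≤ c ‖f‖_{s,μ} N^{−μ+2r−1/s+1}. -/
open Real

noncomputable def chebT (k : ℕ) : ℝ → ℝ := fun t => (Polynomial.Chebyshev.T ℝ k).eval t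

noncomputable def Torth (k : ℕ) : ℝ → ℝ :=
  fun t => (if k = 0 then Real.sqrt π⁻¹ else Real.sqrt (2 / π)) * chebT k t

noncomputable def w (t : ℝ) : ℝ := (1 - t ^ 2) ^ (-(1:ℝ)/2)

noncomputable def chebCoeff (f : ℝ → ℝ) (k : ℕ) : ℝ :=
  ∫ t in (-1:ℝ)..1, w t * f t * Torth k t

noncomputable def normC (g : ℝ → ℝ) : ℝ := ⨆ t : Set.Icc (-1:ℝ) 1, |g t|

noncomputable def normL2 (g : ℝ → ℝ) : ℝ := Real.sqrt (∫ t in (-1:ℝ)..1, w t * (g t) ^ 2)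

noncomputable def normW (s μ : ℝ) (f : ℝ → ℝ) : ℝ :=
  (∑' k : ℕ, (max 1 (k:ℝ)) ^ (s*μ) * |chebCoeff f k| ^ s) ^ (1/s)

noncomputable def chebDeriv (r : ℕ) (f : ℝ → ℝ) : ℝ → ℝ :=
  fun t => ∑' k : ℕ, chebCoeff f k * iteratedDeriv r (Torth k) t

open ENNReal in
noncomputable def seqLpNorm (p : ℝ≥0∞) (ξ : ℕ → ℝ) : ℝ :=
  if p = ⊤ then ⨆ k, |ξ k| else (∑' k, |ξ k| ^ p.toReal) ^ (1 / p.toReal)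

/-!
On `[-1, 1]` the Chebyshev polynomials satisfy the Markov-type bound `|T_k^{(r)}| ≤ 2^r k^{2r}`,
by induction on `r` from `T_k' = k U_{k-1}` and `U_{k+1} = U_{k-1} + 2 T_{k+1}`. Hence the
truncation error is bounded pointwise by `2^r Σ_{k>N} k^{2r} |⟨f, T_k⟩|`. Writing
`k^{2r} |⟨f, T_k⟩| = k^{2r-μ} · k^μ |⟨f, T_k⟩|`, Hölder's inequality with the conjugate
exponent `s'` of `s` (for `s = 1`, the supremum of the weight) bounds this tail by
`‖f‖_{s,μ} (Σ_{k>N} k^{(2r-μ)s'})^{1/s'}`, and comparing the last sum with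
`∫_N^∞ x^{(2r-μ)s'} dx` gives the factor `N^{-μ+2r-1/s+1}`.
-/

open Polynomial Polynomial.Chebyshev

theorem Polynomial.iteratedDeriv_eval {𝕜 : Type*} [NontriviallyNormedField 𝕜] (p : 𝕜[X])
    (n : ℕ) :
    iteratedDeriv n (fun x => p.eval x) = fun x => (derivative^[n] p).eval x := by
  induction n generalizing p with
  | zero => rfl
  | succ n ih =>
    have hderiv : deriv (fun x => p.eval x) = fun x => p.derivative.eval x := by
      ext x; exact p.deriv
    rw [iteratedDeriv_succ', hderiv, ih, Function.iterate_succ_apply]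

namespace Polynomial.Chebyshev

/- Indexing by `k - 1` makes `U (-1) = 0` available as the base case of the recurrence. -/
theorem abs_eval_iterate_derivative_U_sub_one_le {r : ℕ}
    (hT : ∀ (k : ℕ) {t : ℝ}, |t| ≤ 1 →
      |(derivative^[r] (T ℝ k)).eval t| ≤ 2 ^ r * (k : ℝ) ^ (2 * r)) :
    ∀ (k : ℕ) {t : ℝ}, |t| ≤ 1 →
      |(derivative^[r] (U ℝ ((k : ℤ) - 1))).eval t| ≤ 2 ^ (r + 1) * (k : ℝ) ^ (2 * r + 1)
  | 0, _, _ => by simp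
  | 1, _, _ => by
    rcases r.eq_zero_or_pos with rfl | hr
    · norm_num
    · simp [iterate_derivative_one hr]
  | k + 2, t, ht => by
    have hU := abs_eval_iterate_derivative_U_sub_one_le hT k ht
    have hTk := hT (k + 1) ht
    have hrec :
        U ℝ (((k + 2 : ℕ) : ℤ) - 1) =
          2 * T ℝ ((k + 1 : ℕ) : ℤ) + U ℝ ((k : ℤ) - 1) := by
      convert U_eq_two_mul_T_add_U ℝ ((k : ℤ) - 1) using 2 <;> push_cast <;> ring_nf
    have hpow :
        (k : ℝ) ^ (2 * r + 1) + ((k : ℝ) + 1) ^ (2 * r) ≤ ((k : ℝ) + 2) ^ (2 * r + 1) := by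
      have h1 : (k : ℝ) ^ (2 * r) ≤ ((k : ℝ) + 2) ^ (2 * r) := by gcongr; linarith
      have h2 : ((k : ℝ) + 1) ^ (2 * r) ≤ ((k : ℝ) + 2) ^ (2 * r) := by gcongr; linarith
      rw [pow_succ, pow_succ]
      nlinarith [mul_le_mul_of_nonneg_right h1 (Nat.cast_nonneg (α := ℝ) k),
        pow_nonneg (by positivity : (0 : ℝ) ≤ k + 1) (2 * r)]
    rw [hrec, iterate_map_add, ← C_ofNat, iterate_derivative_C_mul, eval_add, eval_mul, eval_C]
    push_cast at hTk ⊢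
    calc _ ≤ 2 * |(derivative^[r] (T ℝ ((k : ℤ) + 1))).eval t|
          + |(derivative^[r] (U ℝ ((k : ℤ) - 1))).eval t| := by
          grw [abs_add_le, abs_mul, abs_two]
      _ ≤ 2 * (2 ^ r * ((k : ℝ) + 1) ^ (2 * r)) + 2 ^ (r + 1) * (k : ℝ) ^ (2 * r + 1) := by
          grw [hTk, hU]
      _ = 2 ^ (r + 1) * ((k : ℝ) ^ (2 * r + 1) + ((k : ℝ) + 1) ^ (2 * r)) := by ring
      _ ≤ 2 ^ (r + 1) * ((k : ℝ) + 2) ^ (2 * r + 1) := by gcongr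

theorem abs_eval_iterate_derivative_T_le (r k : ℕ) {t : ℝ} (ht : |t| ≤ 1) :
    |(derivative^[r] (T ℝ k)).eval t| ≤ 2 ^ r * (k : ℝ) ^ (2 * r) := by
  induction r generalizing k t with
  | zero => simpa using abs_eval_T_real_le_one k ht
  | succ r ih =>
    have hU := abs_eval_iterate_derivative_U_sub_one_le (fun k _ ht => ih k ht) k ht
    rw [Function.iterate_succ_apply, T_derivative_eq_U, Int.cast_natCast,
      iterate_derivative_natCast_mul, eval_mul, eval_natCast, abs_mul, Nat.abs_cast]
    calc (k : ℝ) * _ ≤ k * (2 ^ (r + 1) * (k : ℝ) ^ (2 * r + 1)) := by gcongr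
      _ = 2 ^ (r + 1) * (k : ℝ) ^ (2 * (r + 1)) := by ring

end Polynomial.Chebyshev

theorem iteratedDeriv_Torth (r k : ℕ) (t : ℝ) :
    iteratedDeriv r (Torth k) t =
      (if k = 0 then √π⁻¹ else √(2 / π)) * (derivative^[r] (T ℝ k)).eval t := by
  rw [show Torth k = fun t => (if k = 0 then √π⁻¹ else √(2 / π)) * (T ℝ k).eval t from
      rfl,
    iteratedDeriv_const_mul_field, Polynomial.iteratedDeriv_eval]

theorem abs_iteratedDeriv_Torth_le (r k : ℕ) {t : ℝ} (ht : |t| ≤ 1) :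
    |iteratedDeriv r (Torth k) t| ≤ 2 ^ r * (k : ℝ) ^ (2 * r) := by
  have hc : |if k = 0 then √π⁻¹ else √(2 / π)| ≤ 1 := by
    rw [abs_of_nonneg (by split_ifs <;> positivity)]
    split_ifs
    · exact sqrt_le_one.mpr (inv_le_one_of_one_le₀ (by linarith [two_le_pi]))
    · exact sqrt_le_one.mpr ((div_le_one pi_pos).mpr two_le_pi)
  rw [iteratedDeriv_Torth, abs_mul]
  exact (mul_le_of_le_one_left (abs_nonneg _) hc).trans (abs_eval_iterate_derivative_T_le r k ht)

theorem iteratedDeriv_Torth_of_lt {r k : ℕ} (hk : k < r) (t : ℝ) :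
    iteratedDeriv r (Torth k) t = 0 := by
  rw [iteratedDeriv_Torth, iterate_derivative_eq_zero (by simpa [natDegree_T] using hk),
    eval_zero, mul_zero]

theorem tsum_nat_add_le_tsum {f : ℕ → ℝ} (hf : ∀ n, 0 ≤ f n) (hsum : Summable f)
    (k : ℕ) :
    ∑' i, f (i + k) ≤ ∑' i, f i := by
  rw [← hsum.sum_add_tsum_nat_add k]
  exact le_add_of_nonneg_left (Finset.sum_nonneg fun i _ => hf i)

theorem tsum_rpow_neg_add_nat_succ_le {α x : ℝ} (hα : 1 < α) (hx : 0 < x) :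
    ∑' i : ℕ, (x + (i + 1 : ℕ)) ^ (-α) ≤ x ^ (1 - α) / (α - 1) := by
  refine Real.tsum_le_of_sum_range_le (fun i => by positivity) fun n => ?_
  have hanti : AntitoneOn (fun y : ℝ => y ^ (-α)) (Set.Icc x (x + n)) :=
    fun a ha b _ hab => rpow_le_rpow_of_nonpos (hx.trans_le ha.1) hab (by linarith)
  have hzero : (0 : ℝ) ∉ Set.uIcc x (x + n) := Set.notMem_uIcc_of_lt hx (by positivity)
  calc ∑ i ∈ Finset.range n, (x + (i + 1 : ℕ)) ^ (-α)
      ≤ ∫ y in x..x + n, y ^ (-α) := hanti.sum_le_integral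
    _ = (x ^ (1 - α) - (x + n) ^ (1 - α)) / (α - 1) := by
      rw [integral_rpow (Or.inr ⟨by linarith, hzero⟩), show -α + 1 = -(α - 1) by ring,
        div_neg, ← neg_div, neg_sub, show -(α - 1) = 1 - α by ring]
    _ ≤ x ^ (1 - α) / (α - 1) := by
      gcongr
      exact sub_le_self _ (by positivity)

theorem summable_and_tsum_tail_rpow_neg_mul_le {γ : ℝ} (hγ : 0 ≤ γ) {b : ℕ → ℝ}
    (hb : ∀ k, 0 ≤ b k) (hbs : Summable b) {N : ℕ} (hN : 0 < N) :
    Summable (fun i : ℕ => ((i + (N + 1) : ℕ) : ℝ) ^ (-γ) * b (i + (N + 1))) ∧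
      ∑' i : ℕ, ((i + (N + 1) : ℕ) : ℝ) ^ (-γ) * b (i + (N + 1)) ≤
        (∑' k, b k) * (N : ℝ) ^ (-γ) := by
  have hN' : (0 : ℝ) < N := by exact_mod_cast hN
  have hterm : ∀ i : ℕ, ((i + (N + 1) : ℕ) : ℝ) ^ (-γ) * b (i + (N + 1)) ≤
      (N : ℝ) ^ (-γ) * b (i + (N + 1)) := fun i =>
    mul_le_mul_of_nonneg_right (rpow_le_rpow_of_nonpos hN' (by push_cast; linarith) (by linarith))
      (hb _)
  have htail : Summable fun i => b (i + (N + 1)) := (summable_nat_add_iff (N + 1)).mpr hbs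
  have hsum : Summable (fun i : ℕ => ((i + (N + 1) : ℕ) : ℝ) ^ (-γ) * b (i + (N + 1))) :=
    (htail.mul_left _).of_nonneg_of_le (fun i => by have := hb (i + (N + 1)); positivity) hterm
  refine ⟨hsum, ?_⟩
  calc _ ≤ ∑' i, (N : ℝ) ^ (-γ) * b (i + (N + 1)) :=
        hsum.tsum_le_tsum hterm (htail.mul_left _)
    _ ≤ (N : ℝ) ^ (-γ) * ∑' k, b k := by
      rw [tsum_mul_left]
      exact mul_le_mul_of_nonneg_left (tsum_nat_add_le_tsum hb hbs _) (by positivity)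
    _ = _ := mul_comm _ _

theorem summable_and_tsum_tail_rpow_neg_mul_le_of_holderConjugate {p q γ : ℝ}
    (hpq : p.HolderConjugate q) (hγ : 1 < γ * q) {b : ℕ → ℝ} (hb : ∀ k, 0 ≤ b k)
    (hbp : Summable fun k => b k ^ p) {N : ℕ} (hN : 0 < N) :
    Summable (fun i : ℕ => ((i + (N + 1) : ℕ) : ℝ) ^ (-γ) * b (i + (N + 1))) ∧
      ∑' i : ℕ, ((i + (N + 1) : ℕ) : ℝ) ^ (-γ) * b (i + (N + 1)) ≤
        ((γ * q - 1)⁻¹) ^ (1 / q) * (∑' k, b k ^ p) ^ (1 / p) * (N : ℝ) ^ (1 / q - γ) := by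
  have hN' : (0 : ℝ) < N := by exact_mod_cast hN
  have hq := hpq.symm.pos
  have hcast : ∀ i : ℕ, ((i + (N + 1) : ℕ) : ℝ) = N + (i + 1 : ℕ) := fun i => by
    push_cast; ring
  have hweight : ∀ i : ℕ,
      (((i + (N + 1) : ℕ) : ℝ) ^ (-γ)) ^ q = (N + (i + 1 : ℕ) : ℝ) ^ (-(γ * q)) :=
    fun i => by rw [← rpow_mul (by positivity), hcast]; ring_nf
  have hweight_sum : Summable fun i : ℕ => (((i + (N + 1) : ℕ) : ℝ) ^ (-γ)) ^ q := by
    refine ((summable_nat_add_iff (N + 1)).mpr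
      (Real.summable_nat_rpow.mpr (by linarith : -(γ * q) < -1))).congr fun i => ?_
    rw [hweight, ← hcast]
  have hweight_tsum : ∑' i : ℕ, (((i + (N + 1) : ℕ) : ℝ) ^ (-γ)) ^ q ≤
      (N : ℝ) ^ (1 - γ * q) / (γ * q - 1) := by
    simp_rw [hweight]; exact tsum_rpow_neg_add_nat_succ_le hγ hN'
  have hbp_nonneg : ∀ k, 0 ≤ b k ^ p := fun k => rpow_nonneg (hb k) p
  obtain ⟨hsum, hholder⟩ := summable_and_inner_le_Lp_mul_Lq_tsum_of_nonneg hpq.symm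
    (fun i => by positivity) (fun i => hb _) hweight_sum ((summable_nat_add_iff (N + 1)).mpr hbp)
  refine ⟨hsum, hholder.trans ?_⟩
  calc _ ≤ ((N : ℝ) ^ (1 - γ * q) / (γ * q - 1)) ^ (1 / q) * (∑' k, b k ^ p) ^ (1 / p) :=
        mul_le_mul (rpow_le_rpow (tsum_nonneg fun i => by positivity) hweight_tsum (by positivity))
          (rpow_le_rpow (tsum_nonneg fun i => hbp_nonneg _) (tsum_nat_add_le_tsum hbp_nonneg hbp _)
            (one_div_nonneg.mpr hpq.nonneg))
          (rpow_nonneg (tsum_nonneg fun i => hbp_nonneg _) _) (by positivity)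
    _ = _ := by
      have hγq : 0 ≤ (γ * q - 1)⁻¹ := inv_nonneg.mpr (by linarith)
      rw [div_eq_inv_mul, mul_rpow hγq (by positivity), ← rpow_mul hN'.le]
      field_simp

theorem exists_summable_and_tsum_tail_rpow_neg_mul_le {s γ : ℝ} (hs : 1 ≤ s)
    (hγ : 1 - 1 / s < γ) :
    ∃ C > 0, ∀ b : ℕ → ℝ, (∀ k, 0 ≤ b k) → Summable (fun k => b k ^ s) →
      ∀ N : ℕ, 0 < N →
      Summable (fun i : ℕ => ((i + (N + 1) : ℕ) : ℝ) ^ (-γ) * b (i + (N + 1))) ∧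
      ∑' i : ℕ, ((i + (N + 1) : ℕ) : ℝ) ^ (-γ) * b (i + (N + 1)) ≤
        C * (∑' k, b k ^ s) ^ (1 / s) * (N : ℝ) ^ (1 - 1 / s - γ) := by
  rcases hs.eq_or_lt with rfl | hs
  · refine ⟨1, one_pos, fun b hb hbs N hN => ?_⟩
    simp only [rpow_one, div_one, one_mul, sub_self, zero_sub] at hγ hbs ⊢
    exact summable_and_tsum_tail_rpow_neg_mul_le hγ.le hb hbs hN
  · have hpq : s.HolderConjugate s.conjExponent := .conjExponent hs
    have hq : 1 / s.conjExponent = 1 - 1 / s := by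
      rw [eq_sub_iff_add_eq, add_comm, one_div, one_div, hpq.inv_add_inv_eq_one]
    have hγq : 1 < γ * s.conjExponent := by
      rw [← hq, div_lt_iff₀ hpq.symm.pos] at hγ
      exact hγ
    refine ⟨((γ * s.conjExponent - 1)⁻¹) ^ (1 / s.conjExponent),
      rpow_pos_of_pos (inv_pos.mpr (by linarith)) _, fun b hb hbs N hN => ?_⟩
    rw [← hq]
    exact summable_and_tsum_tail_rpow_neg_mul_le_of_holderConjugate hpq hγq hb hbs hN

theorem exists_summable_and_tsum_tail_rpow_mul_abs_le {s μ ν : ℝ} (hs : 1 ≤ s)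
    (hμν : ν - 1 / s + 1 < μ) :
    ∃ C > 0, ∀ a : ℕ → ℝ,
      Summable (fun k : ℕ => max 1 (k : ℝ) ^ (s * μ) * |a k| ^ s) →
      ∀ N : ℕ, 0 < N →
      Summable (fun i : ℕ => ((i + (N + 1) : ℕ) : ℝ) ^ ν * |a (i + (N + 1))|) ∧
      ∑' i : ℕ, ((i + (N + 1) : ℕ) : ℝ) ^ ν * |a (i + (N + 1))| ≤
        C * (∑' k : ℕ, max 1 (k : ℝ) ^ (s * μ) * |a k| ^ s) ^ (1 / s) *
          (N : ℝ) ^ (-μ + ν - 1 / s + 1) := by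
  obtain ⟨C, hC, htail⟩ :=
    exists_summable_and_tsum_tail_rpow_neg_mul_le (γ := μ - ν) hs (by linarith)
  refine ⟨C, hC, fun a ha N hN => ?_⟩
  have hpow : ∀ k : ℕ,
      (max 1 (k : ℝ) ^ μ * |a k|) ^ s = max 1 (k : ℝ) ^ (s * μ) * |a k| ^ s := fun k => by
    rw [mul_rpow (by positivity) (abs_nonneg _), ← rpow_mul (by positivity), mul_comm μ]
  have hweight : ∀ i : ℕ, ((i + (N + 1) : ℕ) : ℝ) ^ ν * |a (i + (N + 1))| =
      ((i + (N + 1) : ℕ) : ℝ) ^ (-(μ - ν)) *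
        (max 1 ((i + (N + 1) : ℕ) : ℝ) ^ μ * |a (i + (N + 1))|) := fun i => by
    have hk : (1 : ℝ) ≤ ((i + (N + 1) : ℕ) : ℝ) := Nat.one_le_cast.mpr (by omega)
    rw [max_eq_right hk, ← mul_assoc, ← rpow_add (by linarith), neg_sub, sub_add_cancel]
  obtain ⟨hsum, hle⟩ := htail (fun k => max 1 (k : ℝ) ^ μ * |a k|) (fun k => by positivity)
    (ha.congr fun k => (hpow k).symm) N hN
  simp only [hpow] at hle
  simp only [hweight]
  rw [show -μ + ν - 1 / s + 1 = 1 - 1 / s - (μ - ν) by ring]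
  exact ⟨hsum, hle⟩

theorem chebDeriv_sub_sum_Icc_eq_tsum {r N : ℕ} {f : ℝ → ℝ} {t : ℝ}
    (hsum : Summable fun k => chebCoeff f k * iteratedDeriv r (Torth k) t) :
    chebDeriv r f t - ∑ k ∈ Finset.Icc r N, chebCoeff f k * iteratedDeriv r (Torth k) t =
      ∑' i, chebCoeff f (i + (N + 1)) * iteratedDeriv r (Torth (i + (N + 1))) t := by
  have hIcc : ∑ k ∈ Finset.Icc r N, chebCoeff f k * iteratedDeriv r (Torth k) t =
      ∑ k ∈ Finset.range (N + 1), chebCoeff f k * iteratedDeriv r (Torth k) t := by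
    refine Finset.sum_subset (fun k hk => ?_) fun k hk hkr => ?_
    · simp only [Finset.mem_Icc, Finset.mem_range] at hk ⊢; omega
    · simp only [Finset.mem_Icc, Finset.mem_range, not_and, not_le] at hk hkr
      rw [iteratedDeriv_Torth_of_lt (by omega), mul_zero]
  rw [hIcc, chebDeriv, ← hsum.sum_add_tsum_nat_add (N + 1), add_sub_cancel_left]

/-- Lemma 1: C-norm bound for the truncation error of the Chebyshev derivative series. -/
theorem stmt5 (r : ℕ) (s μ : ℝ) (hr : 1 ≤ r) (hs : 1 ≤ s)
    (hμ : 2*(r:ℝ) - 1/s + 1 < μ) :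
    ∃ c > 0, ∀ f : ℝ → ℝ,
      Summable (fun k : ℕ => (max 1 (k:ℝ)) ^ (s*μ) * |chebCoeff f k| ^ s) →
      ∀ N : ℕ, r ≤ N →
        normC (fun t => chebDeriv r f t -
            ∑ k ∈ Finset.Icc r N, chebCoeff f k * iteratedDeriv r (Torth k) t)
          ≤ c * normW s μ f * (N:ℝ) ^ (-μ + 2*(r:ℝ) - 1/s + 1) := by
  obtain ⟨C, hC, htail⟩ :=
    exists_summable_and_tsum_tail_rpow_mul_abs_le (ν := 2 * (r : ℝ)) hs hμ
  refine ⟨2 ^ r * C, by positivity, fun f hf N hN => ?_⟩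
  obtain ⟨hsum, hle⟩ := htail (chebCoeff f) hf N (by omega)
  have : Nonempty (Set.Icc (-1 : ℝ) 1) := ⟨⟨0, by norm_num⟩⟩
  refine ciSup_le fun ⟨t, ht⟩ => ?_
  have hbound : ∀ i : ℕ,
      ‖chebCoeff f (i + (N + 1)) * iteratedDeriv r (Torth (i + (N + 1))) t‖ ≤
      2 ^ r * (((i + (N + 1) : ℕ) : ℝ) ^ (2 * (r : ℝ)) * |chebCoeff f (i + (N + 1))|) :=
    fun i => by
      rw [norm_mul, Real.norm_eq_abs, Real.norm_eq_abs, ← mul_assoc,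
        show 2 * (r : ℝ) = ((2 * r : ℕ) : ℝ) by push_cast; ring, rpow_natCast,
        mul_comm |chebCoeff f _|]
      exact mul_le_mul_of_nonneg_right (abs_iteratedDeriv_Torth_le r _ (abs_le.mpr ht))
        (abs_nonneg _)
  have hg : Summable fun k => chebCoeff f k * iteratedDeriv r (Torth k) t :=
    (summable_nat_add_iff (N + 1)).mp ((hsum.mul_left (2 ^ r)).of_norm_bounded hbound)
  dsimp only
  rw [chebDeriv_sub_sum_Icc_eq_tsum hg]
  calc _ ≤ 2 ^ r *
        ∑' i : ℕ, ((i + (N + 1) : ℕ) : ℝ) ^ (2 * (r : ℝ)) * |chebCoeff f (i + (N + 1))| :=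
        tsum_of_norm_bounded (hsum.hasSum.mul_left _) hbound
    _ ≤ 2 ^ r * (C * normW s μ f * (N : ℝ) ^ (-μ + 2 * (r : ℝ) - 1 / s + 1)) :=
      mul_le_mul_of_nonneg_left hle (by positivity)
    _ = _ := by ring
end

section
/- For r ≥ 1, μ > 0, 1 ≤ s < ∞, and N₁ ≥ 1, the function f₁(t) = 3^{−μ} N₁^{−μ−1/s} Σ_{k=N₁+r}^{2N₁+r−1} T_k(t) satisfies ‖f₁^{(r)}‖_C ≥ |f₁^{(r)}(1)| ≥ (√2 / (√π (2r−1)!!)) · 3^{−μ} N₁^{−μ + 2r − 1/s + 1}. -/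
open Real

section Aux
open Polynomial Polynomial.Chebyshev

-- iteratedDeriv of a polynomial evaluation
lemma polyIteratedDeriv (r : ℕ) : ∀ (p : ℝ[X]),
    iteratedDeriv r (fun t => p.eval t) = fun t => (derivative^[r] p).eval t := by
  induction r with
  | zero => intro p; simp
  | succ r ih =>
    intro p
    rw [iteratedDeriv_succ', Function.iterate_succ_apply]
    have : deriv (fun t => p.eval t) = fun t => (derivative p).eval t := by
      funext t; exact Polynomial.deriv p
    rw [this, ih]

-- Chebyshev ODE
lemma cheb_ode (n : ℤ) :
    (1 - X ^ 2) * derivative (derivative (T ℝ n)) =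
      X * derivative (T ℝ n) - C ((n : ℝ)^2) * T ℝ n := by
  have h := add_one_mul_T_eq_poly_in_U (R := ℝ) (n - 1)
  rw [sub_add_cancel] at h
  push_cast at h
  rw [T_derivative_eq_U]
  have hC : ((n : ℝ[X])) = C ((n : ℝ)) := by simp
  rw [hC, derivative_C_mul]
  rw [hC] at h
  rw [map_pow]
  linear_combination (C ((n:ℝ))) * h


lemma ode_iter (p : ℝ[X]) (c : ℝ)
    (h : (1 - X ^ 2) * derivative (derivative p) = X * derivative p - C c * p) :
    ∀ r : ℕ, (1 - X ^ 2) * derivative^[r + 2] p =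
      (2 * (r : ℝ[X]) + 1) * X * derivative^[r + 1] p
        + ((r : ℝ[X]) ^ 2 - C c) * derivative^[r] p := by
  intro r
  induction r with
  | zero => simpa using by linear_combination h
  | succ r ih =>
    have h2 := congr_arg derivative ih
    simp only [derivative_mul, derivative_one, derivative_sub, derivative_add,
      derivative_X_pow, derivative_X, derivative_C, derivative_natCast,
      derivative_ofNat, derivative_pow, map_ofNat,
      Function.iterate_succ_apply'] at h2 ⊢
    simp only [C_eq_natCast] at h2
    push_cast
    push_cast at h2
    linear_combination h2

lemma eval_rec (p : ℝ[X]) (c : ℝ)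
    (h : (1 - X ^ 2) * derivative (derivative p) = X * derivative p - C c * p) (r : ℕ) :
    (2 * (r : ℝ) + 1) * (derivative^[r + 1] p).eval 1 =
      (c - (r : ℝ) ^ 2) * (derivative^[r] p).eval 1 := by
  have := congr_arg (eval 1) (ode_iter p c h r)
  simp only [eval_mul, eval_add, eval_sub, eval_pow, eval_X, eval_one, eval_C,
    eval_natCast, eval_ofNat, one_pow] at this
  linarith [this]

lemma T_eval_one (n : ℤ) : (T ℝ n).eval 1 = 1 := by
  rw [show (1 : ℝ) = Real.cos 0 by simp, T_real_cos]
  simp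

lemma T_iter_deriv_one (n : ℤ) (r : ℕ) :
    (derivative^[r] (T ℝ n)).eval 1 =
      ∏ j ∈ Finset.range r, (((n : ℝ) ^ 2 - (j : ℝ) ^ 2) / (2 * (j : ℝ) + 1)) := by
  induction r with
  | zero => simpa using T_eval_one n
  | succ r ih =>
    have h := eval_rec (T ℝ n) ((n : ℝ) ^ 2) (cheb_ode n) r
    have h2 : (2 * (r : ℝ) + 1) ≠ 0 := by positivity
    rw [Finset.prod_range_succ, ← ih]
    field_simp at h ⊢
    linarith [h]

lemma prod_lower (r N₁ k : ℕ) (hr : 1 ≤ r) (hk : N₁ + r ≤ k) :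
    ((N₁ : ℝ)) ^ (2 * r) / (Nat.doubleFactorial (2 * r - 1) : ℝ) ≤
      ∏ j ∈ Finset.range r, (((k : ℝ)) ^ 2 - (j : ℝ) ^ 2) / (2 * (j : ℝ) + 1) := by
  obtain ⟨m, rfl⟩ : ∃ m, r = m + 1 := ⟨r - 1, by omega⟩
  have hD : ∏ j ∈ Finset.range (m + 1), (2 * (j : ℝ) + 1) =
      ((Nat.doubleFactorial (2 * (m + 1) - 1) : ℕ) : ℝ) := by
    rw [show 2 * (m + 1) - 1 = 2 * m + 1 by omega, Nat.doubleFactorial_eq_prod_odd]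
    push_cast
    rw [Finset.prod_range_succ']
    simp
  have heq : ((N₁ : ℝ)) ^ (2 * (m + 1)) / (Nat.doubleFactorial (2 * (m + 1) - 1) : ℝ) =
      ∏ j ∈ Finset.range (m + 1), ((N₁ : ℝ) ^ 2 / (2 * (j : ℝ) + 1)) := by
    rw [Finset.prod_div_distrib, Finset.prod_const, Finset.card_range, hD, ← pow_mul]
  rw [heq]
  apply Finset.prod_le_prod
  · intro j _; positivity
  · intro j hj
    have hj' : (j : ℝ) + (N₁ : ℝ) + 1 ≤ (k : ℝ) := by
      have : j + N₁ + 1 ≤ k := by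
        simp only [Finset.mem_range] at hj; omega
      exact_mod_cast this
    have hj0 : (0:ℝ) ≤ (j:ℝ) := Nat.cast_nonneg j
    have hN0 : (0:ℝ) ≤ (N₁:ℝ) := Nat.cast_nonneg N₁
    gcongr
    nlinarith

/-- lower bound on the C-norm of the r-th derivative of the test function f₁. -/
theorem stmt13 (r : ℕ) (μ s : ℝ) (N₁ : ℕ)
    (hr : 1 ≤ r) (hμ : 0 < μ) (hs : 1 ≤ s) (hN : 1 ≤ N₁) :
    let f₁ : ℝ → ℝ := fun t =>
      (3:ℝ) ^ (-μ) * (N₁:ℝ) ^ (-μ - 1/s) * ∑ k ∈ Finset.Icc (N₁ + r) (2*N₁ + r - 1), Torth k t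
    normC (iteratedDeriv r f₁) ≥ |iteratedDeriv r f₁ 1| ∧
    |iteratedDeriv r f₁ 1| ≥
      (Real.sqrt 2 / (Real.sqrt π * (Nat.doubleFactorial (2*r - 1) : ℝ))) *
        (3:ℝ) ^ (-μ) * (N₁:ℝ) ^ (-μ + 2*(r:ℝ) - 1/s + 1) := by

  intro f₁
  have hf₁ : f₁ = fun t =>
      (3:ℝ) ^ (-μ) * (N₁:ℝ) ^ (-μ - 1/s) *
        ∑ k ∈ Finset.Icc (N₁ + r) (2*N₁ + r - 1), Torth k t := rfl
  set A : Finset ℕ := Finset.Icc (N₁ + r) (2*N₁ + r - 1) with hA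
  have hN0 : (0:ℝ) < (N₁:ℝ) := by exact_mod_cast hN
  have hπ : (0:ℝ) < π := Real.pi_pos
  set c₀ : ℝ := (3:ℝ) ^ (-μ) * (N₁:ℝ) ^ (-μ - 1/s) * Real.sqrt (2/π) with hc₀
  have hc₀pos : 0 < c₀ := by
    rw [hc₀]
    have h2π : (0:ℝ) < 2/π := by positivity
    positivity
  set P : ℝ[X] := C c₀ * ∑ k ∈ A, T ℝ (k:ℤ) with hP
  have hsum : f₁ = fun t => P.eval t := by
    funext t
    rw [hf₁]
    simp only [hP, eval_mul, eval_C, eval_finset_sum]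
    have h1 : ∑ k ∈ A, Torth k t = ∑ k ∈ A, Real.sqrt (2/π) * (T ℝ (k:ℤ)).eval t := by
      refine Finset.sum_congr rfl fun k hk => ?_
      have hk0 : k ≠ 0 := by
        simp only [hA, Finset.mem_Icc] at hk; omega
      simp [Torth, chebT, hk0]
    rw [h1, ← Finset.mul_sum, hc₀]
    ring
  have hD : iteratedDeriv r f₁ = fun t => (derivative^[r] P).eval t := by
    rw [hsum, polyIteratedDeriv]
  set D : ℝ := (Nat.doubleFactorial (2*r - 1) : ℝ) with hDdef
  have hDpos : 0 < D := by rw [hDdef]; exact_mod_cast Nat.doubleFactorial_pos _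
  have hval : (derivative^[r] P).eval 1 =
      c₀ * ∑ k ∈ A, ∏ j ∈ Finset.range r,
        (((k:ℝ)) ^ 2 - (j:ℝ) ^ 2) / (2 * (j:ℝ) + 1) := by
    rw [hP, Polynomial.iterate_derivative_C_mul, Polynomial.iterate_derivative_sum]
    simp only [eval_mul, eval_C, eval_finset_sum]
    congr 1
    exact Finset.sum_congr rfl fun k _ => T_iter_deriv_one (k:ℤ) r
  have hcard : A.card = N₁ := by
    rw [hA, Nat.card_Icc]; omega
  have hsumlb : (N₁:ℝ) * ((N₁:ℝ) ^ (2*r) / D) ≤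
      ∑ k ∈ A, ∏ j ∈ Finset.range r, (((k:ℝ)) ^ 2 - (j:ℝ) ^ 2) / (2 * (j:ℝ) + 1) := by
    have h := Finset.card_nsmul_le_sum A
      (fun k => ∏ j ∈ Finset.range r, (((k:ℝ)) ^ 2 - (j:ℝ) ^ 2) / (2 * (j:ℝ) + 1))
      ((N₁:ℝ) ^ (2*r) / D)
      (fun k hk => prod_lower r N₁ k hr (Finset.mem_Icc.mp (by rwa [← hA])).1)
    rw [hcard] at h
    simpa [nsmul_eq_mul] using h
  have key : (Real.sqrt 2 / (Real.sqrt π * D)) * (3:ℝ) ^ (-μ) *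
      (N₁:ℝ) ^ (-μ + 2*(r:ℝ) - 1/s + 1) = c₀ * ((N₁:ℝ) * ((N₁:ℝ) ^ (2*r) / D)) := by
    have h1 : Real.sqrt (2/π) = Real.sqrt 2 / Real.sqrt π :=
      Real.sqrt_div (by norm_num) π
    have h2 : ((N₁:ℝ)) * (N₁:ℝ) ^ (2*r) = (N₁:ℝ) ^ (((2*r+1 : ℕ)):ℝ) := by
      rw [Real.rpow_natCast]; push_cast; ring
    have h3 : (N₁:ℝ) ^ (-μ - 1/s) * ((N₁:ℝ)) * (N₁:ℝ) ^ (2*r) =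
        (N₁:ℝ) ^ (-μ + 2*(r:ℝ) - 1/s + 1) := by
      rw [mul_assoc, h2, ← Real.rpow_add hN0]
      congr 1; push_cast; ring
    rw [hc₀, h1, ← h3]
    have hπ' : Real.sqrt π ≠ 0 := by positivity
    field_simp
  have hval1 : c₀ * ((N₁:ℝ) * ((N₁:ℝ) ^ (2*r) / D)) ≤ iteratedDeriv r f₁ 1 := by
    rw [hD]
    simp only []
    rw [hval]
    exact mul_le_mul_of_nonneg_left hsumlb hc₀pos.le
  constructor
  · have hb : BddAbove (Set.range fun t : Set.Icc (-1:ℝ) 1 => |iteratedDeriv r f₁ t|) := by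
      rw [hD]
      exact BddAbove.mono (Set.range_subset_iff.mpr fun t =>
          Set.mem_image_of_mem (fun x => |eval x ((derivative)^[r] P)|) t.2)
        ((isCompact_Icc.image
          (continuous_abs.comp (Polynomial.continuous _))).bddAbove)
    exact le_ciSup hb ⟨1, by norm_num⟩
  · calc (Real.sqrt 2 / (Real.sqrt π * D)) * (3:ℝ) ^ (-μ) *
          (N₁:ℝ) ^ (-μ + 2*(r:ℝ) - 1/s + 1)
        = c₀ * ((N₁:ℝ) * ((N₁:ℝ) ^ (2*r) / D)) := key
      _ ≤ iteratedDeriv r f₁ 1 := hval1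
      _ ≤ |iteratedDeriv r f₁ 1| := le_abs_self _

end Aux
end
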